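/- arXiv:0709.1675 — 2 statements merged into one kernel-verified Lean document; each statement's English description precedes it below -/
import Mathlib

section
/- Let S be an invertible 2×2 complex matrix with S·S = 𝟙, let μ ∈ ℂ with μ ≠ 0, and set σ = μ · S σ3 S. Then the commutant of the single 4×4 matrix 𝟙⊗σ − σ⊗𝟙, i.e. {X ∈ M₄(ℂ) : X(𝟙⊗σ − σ⊗𝟙) = (𝟙⊗σ − σ⊗𝟙)X}, equals the complex linear span of the six matrices 𝟙⊗𝟙, 𝟙⊗σ, σ⊗𝟙, σ⊗σ, (S⊗S)(σ1⊗σ1 − σ2⊗σ2)(S⊗S), and (S⊗S)(σ1⊗σ2 + σ2⊗σ1)(S⊗S). -/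
/-!
Conjugation by the involution `S ⊗ S` is an algebra automorphism of `M₄(ℂ)`. Since
`S σ S = μ σ3`, it maps `𝟙⊗μσ3 - μσ3⊗𝟙` to `𝟙⊗σ - σ⊗𝟙` and the six generators for `S = 𝟙` to
the six generators for `S`, so it suffices to treat `S = 𝟙`. There `𝟙⊗μσ3 - μσ3⊗𝟙` is diagonal
with entries `0, -2μ, 2μ, 0` at `(0,0), (0,1), (1,0), (1,1)`, so its commutant is the
six-dimensional space of matrices supported on the blocks `{(0,0), (1,1)}`, `{(0,1)}`, `{(1,0)}`,
which the six generators span.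
-/

open Matrix Complex
open scoped Kronecker

noncomputable section

/-- The Pauli matrices. -/
def pauli : Fin 3 → Matrix (Fin 2) (Fin 2) ℂ :=
  ![!![0, 1; 1, 0], !![0, -Complex.I; Complex.I, 0], !![1, 0; 0, -1]]

section Conjugation

variable (R : Type*) {A : Type*} [CommSemiring R] [Semiring A] [Algebra R A]

def conjByInvolution (T : A) (hT : T * T = 1) : A ≃ₐ[R] A where
  toFun X := T * X * T
  invFun X := T * X * T
  left_inv X := by simp only [mul_assoc, hT, mul_one, ← mul_assoc T T, one_mul]
  right_inv X := by simp only [mul_assoc, hT, mul_one, ← mul_assoc T T, one_mul]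
  map_mul' X Y := by
    simp only [mul_assoc]
    rw [← mul_assoc T T, hT, one_mul]
  map_add' X Y := by simp only [mul_add, add_mul]
  commutes' r := by rw [← Algebra.commutes, mul_assoc, hT, mul_one]

theorem conjByInvolution_apply (T : A) (hT : T * T = 1) (X : A) :
    conjByInvolution R T hT X = T * X * T :=
  rfl

end Conjugation

theorem image_setOf_commute {F M N : Type*} [Mul M] [Mul N] [EquivLike F M N]
    [MulEquivClass F M N] (e : F) (a : M) : e '' {x | Commute x a} = {y | Commute y (e a)} := by
  ext y
  obtain ⟨x, rfl⟩ := EquivLike.surjective e y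
  rw [(EquivLike.injective e).mem_set_image]
  exact (commute_map_iff (EquivLike.injective e)).symm

theorem span_subset_setOf_commute {R A : Type*} [CommSemiring R] [Semiring A] [Algebra R A]
    {s : Set A} {a : A} (hs : ∀ x ∈ s, Commute x a) :
    (Submodule.span R s : Set A) ⊆ {x | Commute x a} := by
  intro x hx
  induction hx using Submodule.span_induction with
  | mem x hx => exact hs x hx
  | zero => exact Commute.zero_left a
  | add x y _ _ hx hy => exact hx.add_left hy
  | smul r x _ hx => exact hx.smul_left r

theorem commute_diagonal_iff {n R : Type*} [Fintype n] [DecidableEq n] [CommRing R]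
    [NoZeroDivisors R] (X : Matrix n n R) (d : n → R) :
    Commute X (diagonal d) ↔ ∀ i j, d i ≠ d j → X i j = 0 := by
  simp only [commute_iff_eq, ← Matrix.ext_iff, mul_diagonal, diagonal_mul]
  refine forall₂_congr fun i j => ?_
  rw [mul_comm, ← sub_eq_zero, ← sub_mul, mul_eq_zero, sub_eq_zero, or_iff_not_imp_left, ne_comm]

def antisymmKronecker {n R : Type*} [DecidableEq n] [Ring R] (σ : Matrix n n R) :
    Matrix (n × n) (n × n) R :=
  1 ⊗ₖ σ - σ ⊗ₖ 1

theorem antisymmKronecker_diagonal {n R : Type*} [DecidableEq n] [Ring R] (v : n → R) :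
    antisymmKronecker (diagonal v) = diagonal fun p => v p.2 - v p.1 := by
  rw [antisymmKronecker, ← diagonal_one, diagonal_kronecker_diagonal, diagonal_kronecker_diagonal,
    diagonal_sub]
  simp

theorem smul_pauli_two_eq_diagonal (μ : ℂ) : μ • pauli 2 = diagonal ![μ, -μ] := by
  ext i j
  fin_cases i <;> fin_cases j <;> simp [pauli]

theorem setOf_commute_antisymmKronecker_smul_pauli_two (μ : ℂ) (hμ : μ ≠ 0) :
    {X | Commute X (antisymmKronecker (μ • pauli 2))} =
      Submodule.span ℂ {1 ⊗ₖ 1, 1 ⊗ₖ (μ • pauli 2), (μ • pauli 2) ⊗ₖ 1,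
        (μ • pauli 2) ⊗ₖ (μ • pauli 2), pauli 0 ⊗ₖ pauli 0 - pauli 1 ⊗ₖ pauli 1,
        pauli 0 ⊗ₖ pauli 1 + pauli 1 ⊗ₖ pauli 0} := by
  have hV : antisymmKronecker (μ • pauli 2) = diagonal fun p => ![μ, -μ] p.2 - ![μ, -μ] p.1 := by
    rw [smul_pauli_two_eq_diagonal, antisymmKronecker_diagonal]
  apply subset_antisymm
  · intro X hX
    rw [Set.mem_ofPred_eq, hV, commute_diagonal_iff] at hX
    -- With `τ = μ • pauli 2`: the diagonal of `X` is expanded in the basis `1⊗1, 1⊗τ, τ⊗1, τ⊗τ`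
    -- of the diagonal matrices, its corner entries `X₀₀,₁₁`, `X₁₁,₀₀` in the last two generators.
    have hX_eq : X =
        ((X (0,0) (0,0) + X (0,1) (0,1) + X (1,0) (1,0) + X (1,1) (1,1)) / 4) • (1 ⊗ₖ 1)
        + ((X (0,0) (0,0) - X (0,1) (0,1) + X (1,0) (1,0) - X (1,1) (1,1)) / (4 * μ)) •
          (1 ⊗ₖ (μ • pauli 2))
        + ((X (0,0) (0,0) + X (0,1) (0,1) - X (1,0) (1,0) - X (1,1) (1,1)) / (4 * μ)) •
          ((μ • pauli 2) ⊗ₖ 1)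
        + ((X (0,0) (0,0) - X (0,1) (0,1) - X (1,0) (1,0) + X (1,1) (1,1)) / (4 * μ ^ 2)) •
          ((μ • pauli 2) ⊗ₖ (μ • pauli 2))
        + ((X (0,0) (1,1) + X (1,1) (0,0)) / 4) • (pauli 0 ⊗ₖ pauli 0 - pauli 1 ⊗ₖ pauli 1)
        + ((X (0,0) (1,1) - X (1,1) (0,0)) * I / 4) •
          (pauli 0 ⊗ₖ pauli 1 + pauli 1 ⊗ₖ pauli 0) := by
      ext i j
      fin_cases i <;> fin_cases j <;> simp [pauli]
      all_goals first
        | (apply hX; simp; grind)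
        | (field_simp; ring1)
        | (field_simp; ring_nf; rw [I_sq]; ring1)
    rw [SetLike.mem_coe, hX_eq]
    refine add_mem (add_mem (add_mem (add_mem (add_mem ?_ ?_) ?_) ?_) ?_) ?_ <;>
      exact Submodule.smul_mem _ _ (Submodule.subset_span (by simp))
  · refine span_subset_setOf_commute fun x hx => ?_
    simp only [Set.mem_insert_iff, Set.mem_singleton_iff] at hx
    rw [hV, commute_diagonal_iff]
    rcases hx with rfl | rfl | rfl | rfl | rfl | rfl <;>
      intro i j <;> fin_cases i <;> fin_cases j <;> simp [pauli]

theorem commutant_antisymmetric_V_general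
    (S : Matrix (Fin 2) (Fin 2) ℂ) (hS : S * S = 1)
    (μ : ℂ) (hμ : μ ≠ 0)
    (σ : Matrix (Fin 2) (Fin 2) ℂ) (hσ : σ = μ • (S * pauli 2 * S)) :
    {X : Matrix (Fin 2 × Fin 2) (Fin 2 × Fin 2) ℂ |
        X * ((1 : Matrix (Fin 2) (Fin 2) ℂ) ⊗ₖ σ - σ ⊗ₖ (1 : Matrix (Fin 2) (Fin 2) ℂ))
          = ((1 : Matrix (Fin 2) (Fin 2) ℂ) ⊗ₖ σ - σ ⊗ₖ (1 : Matrix (Fin 2) (Fin 2) ℂ)) * X}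
      = (Submodule.span ℂ
          {(1 : Matrix (Fin 2) (Fin 2) ℂ) ⊗ₖ (1 : Matrix (Fin 2) (Fin 2) ℂ),
            (1 : Matrix (Fin 2) (Fin 2) ℂ) ⊗ₖ σ,
            σ ⊗ₖ (1 : Matrix (Fin 2) (Fin 2) ℂ),
            σ ⊗ₖ σ,
            (S ⊗ₖ S) * (pauli 0 ⊗ₖ pauli 0 - pauli 1 ⊗ₖ pauli 1) * (S ⊗ₖ S),
            (S ⊗ₖ S) * (pauli 0 ⊗ₖ pauli 1 + pauli 1 ⊗ₖ pauli 0) * (S ⊗ₖ S)}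
          : Set (Matrix (Fin 2 × Fin 2) (Fin 2 × Fin 2) ℂ)) := by
  have hSS : S ⊗ₖ S * S ⊗ₖ S = 1 := by rw [← mul_kronecker_mul, hS, one_kronecker_one]
  let e := conjByInvolution ℂ (S ⊗ₖ S) hSS
  have he (P Q : Matrix (Fin 2) (Fin 2) ℂ) : e (P ⊗ₖ Q) = (S * P * S) ⊗ₖ (S * Q * S) := by
    rw [conjByInvolution_apply, mul_kronecker_mul, mul_kronecker_mul]
  have h1 : S * 1 * S = 1 := by rw [mul_one, hS]
  have hτ : S * (μ • pauli 2) * S = σ := by rw [hσ, mul_smul_comm, smul_mul_assoc]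
  have hV : e (antisymmKronecker (μ • pauli 2)) = antisymmKronecker σ := by
    rw [antisymmKronecker, map_sub, he, he, h1, hτ, antisymmKronecker]
  change {X | Commute X (antisymmKronecker σ)} = _
  rw [← hV, ← image_setOf_commute e, setOf_commute_antisymmKronecker_smul_pauli_two μ hμ,
    show ⇑e = ⇑e.toLinearMap from rfl, ← Submodule.map_coe, Submodule.map_span]
  simp only [Set.image_insert_eq, Set.image_singleton, AlgEquiv.toLinearMap_apply, he, h1, hτ]
  rfl

/-- for `σ = μ • S σ3 S` with `S` an invertible involution and `μ ≠ 0`, the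
commutant of `𝟙⊗σ - σ⊗𝟙` is the span of the six matrices
`𝟙⊗𝟙, 𝟙⊗σ, σ⊗𝟙, σ⊗σ, (S⊗S)(σ1⊗σ1 - σ2⊗σ2)(S⊗S), (S⊗S)(σ1⊗σ2 + σ2⊗σ1)(S⊗S)`. -/
theorem commutant_antisymmetric_V
    (S : Matrix (Fin 2) (Fin 2) ℂ) (hS_unit : IsUnit S) (hS : S * S = 1)
    (μ : ℂ) (hμ : μ ≠ 0)
    (σ : Matrix (Fin 2) (Fin 2) ℂ) (hσ : σ = μ • (S * pauli 2 * S)) :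
    {X : Matrix (Fin 2 × Fin 2) (Fin 2 × Fin 2) ℂ |
        X * ((1 : Matrix (Fin 2) (Fin 2) ℂ) ⊗ₖ σ - σ ⊗ₖ (1 : Matrix (Fin 2) (Fin 2) ℂ))
          = ((1 : Matrix (Fin 2) (Fin 2) ℂ) ⊗ₖ σ - σ ⊗ₖ (1 : Matrix (Fin 2) (Fin 2) ℂ)) * X}
      = (Submodule.span ℂ
          {(1 : Matrix (Fin 2) (Fin 2) ℂ) ⊗ₖ (1 : Matrix (Fin 2) (Fin 2) ℂ),
            (1 : Matrix (Fin 2) (Fin 2) ℂ) ⊗ₖ σ,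
            σ ⊗ₖ (1 : Matrix (Fin 2) (Fin 2) ℂ),
            σ ⊗ₖ σ,
            (S ⊗ₖ S) * (pauli 0 ⊗ₖ pauli 0 - pauli 1 ⊗ₖ pauli 1) * (S ⊗ₖ S),
            (S ⊗ₖ S) * (pauli 0 ⊗ₖ pauli 1 + pauli 1 ⊗ₖ pauli 0) * (S ⊗ₖ S)}
          : Set (Matrix (Fin 2 × Fin 2) (Fin 2 × Fin 2) ℂ)) :=
  commutant_antisymmetric_V_general S hS μ hμ σ hσ
end
end

section
/- Let R be a 2×2 complex matrix that is unitary and Hermitian (so R = R† = R⁻¹), and define the real numbers u_k = ½ Tr(σ_k · R σ3 R) for k = 1, 2, 3 (so that R σ3 R = Σ_k u_k σ_k). Define P_1 = (R⊗R) Π_1 (R⊗R), P_2 = (R⊗R) Π_4 (R⊗R), P_3 = (R⊗R)(Π_2 + Π_3)(R⊗R), where Π_1, Π_2, Π_3, Π_4 are the diagonal matrix units of M₄(ℂ) in index order (0,0),(0,1),(1,0),(1,1). Let P ∈ ℝ with 0 ≤ P ≤ 1 and let ψ = √P · e₀⊗e₀ + √(1−P) · e₁⊗e₁, where e₀, e₁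 is the standard basis of ℂ². Then Tr_A[Σ_{n=1}^{3} P_n |ψ⟩⟨ψ| P_n] = ½(𝟙 + (2P−1)·u_3·(u_1 σ1 + u_2 σ2 + u_3 σ3)); in particular, different values of the initial entanglement parameter P give different asymptotic states of the target system whenever u_3 ≠ 0. -/
open Matrix Complex
open scoped Kronecker

noncomputable section

/-- The diagonal matrix units `Π_p` of `M₄(ℂ)` indexed by `Fin 2 × Fin 2`. -/
def diagUnit (p : Fin 2 × Fin 2) : Matrix (Fin 2 × Fin 2) (Fin 2 × Fin 2) ℂ :=
  Matrix.single p p 1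

/-- Partial trace over the second tensor factor. -/
def ptraceA (M : Matrix (Fin 2 × Fin 2) (Fin 2 × Fin 2) ℂ) : Matrix (Fin 2) (Fin 2) ℂ :=
  Matrix.of fun i j => ∑ k : Fin 2, M (i, k) (j, k)

/-- The standard basis `e₀, e₁` of `ℂ²`. -/
def stdVec (i : Fin 2) : Fin 2 → ℂ := Pi.single i 1

/-- The entangled vector `ψ = √P e₀⊗e₀ + √(1-P) e₁⊗e₁`. -/
def psiVec (P : ℝ) : Fin 2 × Fin 2 → ℂ := fun p =>
  ((Real.sqrt P : ℝ) : ℂ) * stdVec 0 p.1 * stdVec 0 p.2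
    + ((Real.sqrt (1 - P) : ℝ) : ℂ) * stdVec 1 p.1 * stdVec 1 p.2

/-- The asymptotic reduced state `Tr_A[Σₙ Pₙ |ψ⟩⟨ψ| Pₙ]` as a function of `P`. -/
def asympState (P₁ P₂ P₃ : Matrix (Fin 2 × Fin 2) (Fin 2 × Fin 2) ℂ) (P : ℝ) :
    Matrix (Fin 2) (Fin 2) ℂ :=
  ptraceA (P₁ * vecMulVec (psiVec P) (star (psiVec P)) * P₁
    + P₂ * vecMulVec (psiVec P) (star (psiVec P)) * P₂
    + P₃ * vecMulVec (psiVec P) (star (psiVec P)) * P₃)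

/-!
Since `R` is a Hermitian unitary, `R * R = 1`, so conjugating by `R ⊗ R` commutes with the
partial trace up to conjugation by `R`. Undoing this conjugation, the three projectors become the
blocks `{00}, {11}, {01, 10}` of fixed excitation number; dephasing along them leaves only the
diagonal of the reduced state. The answer is therefore `R · diag(R ρ R) · R` with
`ρ = diag(P, 1 - P)` the reduced state of `ψ`. Writing diagonal matrices as `a + b σ₃` and using
`Tr (R σ₃ R) = 0`, this is `½(1 + (2P - 1) u₃ R σ₃ R)`, and `R σ₃ R = Σ uₖ σₖ` is its Pauli
decomposition.
-/

lemma ptraceA_kronecker_one_mul_mul (A B : Matrix (Fin 2) (Fin 2) ℂ)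
    (M : Matrix (Fin 2 × Fin 2) (Fin 2 × Fin 2) ℂ) :
    ptraceA ((A ⊗ₖ 1) * M * (B ⊗ₖ 1)) = A * ptraceA M * B := by
  ext i j
  simp only [ptraceA, mul_apply, kroneckerMap_apply, one_apply, mul_ite, mul_one, mul_zero,
    ite_mul, zero_mul, Fintype.sum_prod_type, Finset.sum_ite_eq, Finset.mem_univ, ↓reduceIte,
    Fin.sum_univ_two, Finset.sum_ite_eq', of_apply]
  ring

lemma ptraceA_one_kronecker_mul_comm (B : Matrix (Fin 2) (Fin 2) ℂ)
    (M : Matrix (Fin 2 × Fin 2) (Fin 2 × Fin 2) ℂ) :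
    ptraceA ((1 ⊗ₖ B) * M) = ptraceA (M * (1 ⊗ₖ B)) := by
  ext i j
  simp only [ptraceA, mul_apply, kroneckerMap_apply, one_apply, ite_mul, one_mul, zero_mul,
    Fintype.sum_prod_type, Finset.sum_ite_irrel, Fin.sum_univ_two, Finset.sum_const_zero,
    Finset.sum_ite_eq, Finset.mem_univ, ↓reduceIte, of_apply, mul_ite, mul_zero, Finset.sum_ite_eq']
  ring

def dephase (X : Matrix (Fin 2 × Fin 2) (Fin 2 × Fin 2) ℂ) :
    Matrix (Fin 2 × Fin 2) (Fin 2 × Fin 2) ℂ :=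
  diagUnit (0, 0) * X * diagUnit (0, 0) + diagUnit (1, 1) * X * diagUnit (1, 1)
    + (diagUnit (0, 1) + diagUnit (1, 0)) * X * (diagUnit (0, 1) + diagUnit (1, 0))

lemma ptraceA_dephase (X : Matrix (Fin 2 × Fin 2) (Fin 2 × Fin 2) ℂ) :
    ptraceA (dephase X) = diagonal fun i => ptraceA X i i := by
  ext i j
  fin_cases i <;> fin_cases j <;>
    simp [dephase, diagUnit, ptraceA, Matrix.add_mul, Matrix.mul_add, Fin.sum_univ_two,
      single_apply]

lemma ptraceA_vecMulVec_psiVec {P : ℝ} (hP₀ : 0 ≤ P) (hP₁ : P ≤ 1) :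
    ptraceA (vecMulVec (psiVec P) (star (psiVec P))) = diagonal ![(P : ℂ), 1 - P] := by
  ext i j
  fin_cases i <;> fin_cases j <;>
    simp [ptraceA, psiVec, stdVec, vecMulVec_apply, Fin.sum_univ_two, ← ofReal_mul, hP₀, hP₁]

lemma pauli_decomposition (A : Matrix (Fin 2) (Fin 2) ℂ) :
    A = (A.trace / 2) • 1 + ∑ k, ((pauli k * A).trace / 2) • pauli k := by
  ext i j
  fin_cases i <;> fin_cases j <;>
    simp [pauli, trace, Fin.sum_univ_three, mul_apply, Fin.sum_univ_two] <;>
    ring_nf <;> simp only [I_sq] <;> ring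

lemma diagonal_eq_one_add_pauli_two (d : Fin 2 → ℂ) :
    diagonal d
      = ((d 0 + d 1) / 2) • (1 : Matrix (Fin 2) (Fin 2) ℂ) + ((d 0 - d 1) / 2) • pauli 2 := by
  ext i j
  fin_cases i <;> fin_cases j <;> simp [pauli] <;> ring

lemma asympState_eq_ptraceA_dephase (U : Matrix (Fin 2 × Fin 2) (Fin 2 × Fin 2) ℂ) (P : ℝ) :
    asympState (U * diagUnit (0, 0) * U) (U * diagUnit (1, 1) * U)
        (U * (diagUnit (0, 1) + diagUnit (1, 0)) * U) P
      = ptraceA (U * dephase (U * vecMulVec (psiVec P) (star (psiVec P)) * U) * U) := by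
  simp only [asympState, dephase, Matrix.mul_add, Matrix.add_mul, Matrix.mul_assoc]

section Involution

variable {R : Matrix (Fin 2) (Fin 2) ℂ} (hR : R * R = 1)
include hR

lemma ptraceA_kronecker_conj (M : Matrix (Fin 2 × Fin 2) (Fin 2 × Fin 2) ℂ) :
    ptraceA ((R ⊗ₖ R) * M * (R ⊗ₖ R)) = R * ptraceA M * R := by
  have hsplit : R ⊗ₖ R = (R ⊗ₖ 1) * (1 ⊗ₖ R) := by
    rw [← mul_kronecker_mul, Matrix.mul_one, Matrix.one_mul]
  have hswap : R ⊗ₖ R = (1 ⊗ₖ R) * (R ⊗ₖ 1) := by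
    rw [← mul_kronecker_mul, Matrix.mul_one, Matrix.one_mul]
  calc ptraceA ((R ⊗ₖ R) * M * (R ⊗ₖ R))
      = ptraceA ((R ⊗ₖ 1) * ((1 ⊗ₖ R) * M * (1 ⊗ₖ R)) * (R ⊗ₖ 1)) := by
        nth_rewrite 1 [hsplit]
        rw [hswap]
        simp only [Matrix.mul_assoc]
    _ = R * ptraceA (M * ((1 : Matrix (Fin 2) (Fin 2) ℂ) ⊗ₖ (R * R))) * R := by
        rw [ptraceA_kronecker_one_mul_mul, Matrix.mul_assoc (1 ⊗ₖ R),
          ptraceA_one_kronecker_mul_comm, Matrix.mul_assoc M, ← mul_kronecker_mul, Matrix.mul_one]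
    _ = R * ptraceA M * R := by
        rw [hR, one_kronecker_one, Matrix.mul_one]

lemma conj_diagonal (d : Fin 2 → ℂ) :
    R * diagonal d * R = ((d 0 + d 1) / 2) • 1 + ((d 0 - d 1) / 2) • (R * pauli 2 * R) := by
  rw [diagonal_eq_one_add_pauli_two, Matrix.mul_add, Matrix.add_mul, Matrix.mul_smul,
    Matrix.smul_mul, Matrix.mul_one, hR, Matrix.mul_smul, Matrix.smul_mul]

lemma trace_conj_pauli_two : (R * pauli 2 * R).trace = 0 := by
  rw [Matrix.trace_mul_cycle, hR, Matrix.one_mul]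
  simp [pauli, trace]

lemma conj_diagonal_bloch (c : ℂ) :
    R * diagonal (fun i => ((1 / 2 : ℂ) • (1 + c • (R * pauli 2 * R))) i i) * R
      = (1 / 2 : ℂ) • (1 + (c * (R * pauli 2 * R) 0 0) • (R * pauli 2 * R)) := by
  have h11 : (R * pauli 2 * R) 1 1 = -(R * pauli 2 * R) 0 0 := by
    have := trace_conj_pauli_two hR
    rw [trace_fin_two] at this
    linear_combination this
  rw [conj_diagonal hR]
  simp only [Matrix.smul_apply, Matrix.add_apply, one_apply_eq, h11, smul_eq_mul]
  module

lemma asympState_kronecker_conj {P : ℝ} (hP₀ : 0 ≤ P) (hP₁ : P ≤ 1) :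
    asympState ((R ⊗ₖ R) * diagUnit (0, 0) * (R ⊗ₖ R)) ((R ⊗ₖ R) * diagUnit (1, 1) * (R ⊗ₖ R))
        ((R ⊗ₖ R) * (diagUnit (0, 1) + diagUnit (1, 0)) * (R ⊗ₖ R)) P
      = (1 / 2 : ℂ) • (1 + ((2 * P - 1) * (R * pauli 2 * R) 0 0) • (R * pauli 2 * R)) := by
  have hreduced : R * diagonal ![(P : ℂ), 1 - P] * R
      = (1 / 2 : ℂ) • (1 + (2 * P - 1 : ℂ) • (R * pauli 2 * R)) := by
    rw [conj_diagonal hR]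
    simp only [cons_val_zero, cons_val_one]
    module
  rw [asympState_eq_ptraceA_dephase, ptraceA_kronecker_conj hR, ptraceA_dephase,
    ptraceA_kronecker_conj hR, ptraceA_vecMulVec_psiVec hP₀ hP₁, hreduced,
    conj_diagonal_bloch hR]

end Involution

/-- Cases 1 and 3, correlated initial state: for the entangled initial state
`ψ`, the asymptotic reduced state is `½(𝟙 + (2P-1) u₃ (u₁σ₁ + u₂σ₂ + u₃σ₃))`; in particular
different values of `P` give different asymptotic states whenever `u₃ ≠ 0`. -/
theorem asymptotic_state_from_entangled_initial_state
    (R : Matrix (Fin 2) (Fin 2) ℂ) (hR_herm : Rᴴ = R) (hR_unitary : R * Rᴴ = 1)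
    (u : Fin 3 → ℝ)
    (hu : ∀ k, (u k : ℂ) = (pauli k * (R * pauli 2 * R)).trace / 2)
    (P₁ P₂ P₃ : Matrix (Fin 2 × Fin 2) (Fin 2 × Fin 2) ℂ)
    (hP₁ : P₁ = (R ⊗ₖ R) * diagUnit (0, 0) * (R ⊗ₖ R))
    (hP₂ : P₂ = (R ⊗ₖ R) * diagUnit (1, 1) * (R ⊗ₖ R))
    (hP₃ : P₃ = (R ⊗ₖ R) * (diagUnit (0, 1) + diagUnit (1, 0)) * (R ⊗ₖ R)) :
    (∀ P : ℝ, 0 ≤ P → P ≤ 1 →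
      asympState P₁ P₂ P₃ P
        = (1 / 2 : ℂ) • ((1 : Matrix (Fin 2) (Fin 2) ℂ)
            + (((2 * P - 1) * u 2 : ℝ) : ℂ) •
                ((u 0 : ℂ) • pauli 0 + (u 1 : ℂ) • pauli 1 + (u 2 : ℂ) • pauli 2)))
    ∧ (u 2 ≠ 0 → ∀ P Q : ℝ, 0 ≤ P → P ≤ 1 → 0 ≤ Q → Q ≤ 1 →
        asympState P₁ P₂ P₃ P = asympState P₁ P₂ P₃ Q → P = Q) := by
  have hR : R * R = 1 := by rwa [hR_herm] at hR_unitary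
  have hA :
      R * pauli 2 * R = (u 0 : ℂ) • pauli 0 + (u 1 : ℂ) • pauli 1 + (u 2 : ℂ) • pauli 2 := by
    rw [pauli_decomposition (R * pauli 2 * R), trace_conj_pauli_two hR]
    simp [Fin.sum_univ_three, hu]
  have hA₀₀ : (R * pauli 2 * R) 0 0 = u 2 := by
    rw [hA]
    simp [pauli]
  have hstate : ∀ P : ℝ, 0 ≤ P → P ≤ 1 → asympState P₁ P₂ P₃ P
      = (1 / 2 : ℂ) • (1 + (((2 * P - 1) * u 2 : ℝ) : ℂ) • (R * pauli 2 * R)) := by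
    intro P h₀ h₁
    subst hP₁ hP₂ hP₃
    rw [asympState_kronecker_conj hR h₀ h₁, hA₀₀]
    push_cast
    rfl
  refine ⟨fun P h₀ h₁ => by rw [hstate P h₀ h₁, hA], fun hu₂ P Q hP hP' hQ hQ' hPQ => ?_⟩
  rw [hstate P hP hP', hstate Q hQ hQ'] at hPQ
  simpa [hA₀₀, hu₂] using congrArg (· 0 0) hPQ

end
end
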